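/- Let D, T, u, ℓ be unit vectors in Euclidean space ℝ³ and let ε ≥ 0. If |⟨D,T⟩| ≤ ε, |⟨D,ℓ⟩| ≤ ε, |⟨u,T⟩| ≤ ε, |⟨u,ℓ⟩| ≤ ε, and |⟨T,ℓ⟩| ≤ 0.98, then |⟨D,u⟩| ≥ 1 − 202·ε². -/

import Mathlib

open scoped RealInnerProductSpace

/-! Four vectors in a space of dimension three are linearly dependent, so the Gram matrix of
`D, T, ℓ, u` is singular. Its determinant is `(1 - t²)(1 - x²)` with `t = ⟪T, ℓ⟫`, `x = ⟪D, u⟫`,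
plus terms that are each at most `ε²` times a monomial in `|t|, |x|`; altogether they are bounded
by `4ε²(1 + |t|)(1 + |x|)`. Cancelling `(1 + |t|)(1 + |x|)` gives `(1 - |t|)(1 - |x|) ≤ 4ε²`, and
`|t| ≤ 0.98` turns this into `1 - |x| ≤ 200ε²`. -/

theorem Matrix.det_gram_eq_zero_of_finrank_lt {𝕜 E n : Type*} [RCLike 𝕜]
    [SeminormedAddCommGroup E] [InnerProductSpace 𝕜 E] [Module.Finite 𝕜 E]
    [Fintype n] [DecidableEq n] {v : n → E} (h : Module.finrank 𝕜 E < Fintype.card n) :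
    (gram 𝕜 v).det = 0 := by
  by_contra h0
  exact h.not_ge (linearIndependent_of_det_gram_ne_zero h0).fintype_card_le_finrank

theorem det_fin_four_symm_of_diag_one (a b c d t x : ℝ) :
    !![1, a, b, x; a, 1, t, c; b, t, 1, d; x, c, d, 1].det
      = (1 - t ^ 2) * (1 - x ^ 2) - (a ^ 2 + b ^ 2 + c ^ 2 + d ^ 2) + 2 * t * (a * b + c * d)
        + 2 * x * (a * c + b * d) - 2 * t * x * (a * d + b * c) + (a * d - b * c) ^ 2 := by
  simp [Matrix.det_succ_row_zero, Fin.sum_univ_succ, Fin.succAbove]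
  ring

theorem one_sub_abs_mul_one_sub_abs_le {a b c d t x ε : ℝ}
    (ha : |a| ≤ ε) (hb : |b| ≤ ε) (hc : |c| ≤ ε) (hd : |d| ≤ ε)
    (h : (1 - t ^ 2) * (1 - x ^ 2) - (a ^ 2 + b ^ 2 + c ^ 2 + d ^ 2) + 2 * t * (a * b + c * d)
        + 2 * x * (a * c + b * d) - 2 * t * x * (a * d + b * c) + (a * d - b * c) ^ 2 = 0) :
    (1 - |t|) * (1 - |x|) ≤ 4 * ε ^ 2 := by
  have hε : 0 ≤ ε := (abs_nonneg a).trans ha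
  have hprod : ∀ {y z : ℝ}, |y| ≤ ε → |z| ≤ ε → |y * z| ≤ ε ^ 2 := fun hy hz => by
    rw [abs_mul, sq]; exact mul_le_mul hy hz (abs_nonneg _) hε
  have hsq : ∀ {y : ℝ}, |y| ≤ ε → y ^ 2 ≤ ε ^ 2 := fun hy => by
    simpa [sq_abs] using pow_le_pow_left₀ (abs_nonneg _) hy 2
  have key : (1 + |t|) * (1 + |x|) * ((1 - |t|) * (1 - |x|))
      ≤ (1 + |t|) * (1 + |x|) * (4 * ε ^ 2) := by
    have e1 : |t * (a * b + c * d)| ≤ |t| * (2 * ε ^ 2) := by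
      rw [abs_mul]; gcongr; exact (abs_add_le _ _).trans (by linarith [hprod ha hb, hprod hc hd])
    have e2 : |x * (a * c + b * d)| ≤ |x| * (2 * ε ^ 2) := by
      rw [abs_mul]; gcongr; exact (abs_add_le _ _).trans (by linarith [hprod ha hc, hprod hb hd])
    have e3 : |t * x * (a * d + b * c)| ≤ |t| * |x| * (2 * ε ^ 2) := by
      rw [abs_mul, abs_mul]; gcongr
      exact (abs_add_le _ _).trans (by linarith [hprod ha hd, hprod hb hc])
    nlinarith [neg_abs_le (t * (a * b + c * d)), neg_abs_le (x * (a * c + b * d)),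
      le_abs_self (t * x * (a * d + b * c)), sq_nonneg (a * d - b * c),
      hsq ha, hsq hb, hsq hc, hsq hd, sq_abs t, sq_abs x]
  exact le_of_mul_le_mul_left key (by positivity)

theorem one_sub_abs_inner_mul_one_sub_abs_inner_le {E : Type*} [NormedAddCommGroup E]
    [InnerProductSpace ℝ E] [FiniteDimensional ℝ E] (hE : Module.finrank ℝ E ≤ 3)
    {D T u ℓ : E} {ε : ℝ} (hD : ‖D‖ = 1) (hT : ‖T‖ = 1) (hu : ‖u‖ = 1) (hℓ : ‖ℓ‖ = 1)
    (hDT : |⟪D, T⟫| ≤ ε) (hDℓ : |⟪D, ℓ⟫| ≤ ε) (huT : |⟪u, T⟫| ≤ ε) (huℓ : |⟪u, ℓ⟫| ≤ ε) :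
    (1 - |⟪T, ℓ⟫|) * (1 - |⟪D, u⟫|) ≤ 4 * ε ^ 2 := by
  have hdet := Matrix.det_gram_eq_zero_of_finrank_lt (𝕜 := ℝ) (v := ![D, T, ℓ, u])
    (by simp only [Fintype.card_fin]; omega)
  have hgram : Matrix.gram ℝ ![D, T, ℓ, u] =
      !![1, ⟪D, T⟫, ⟪D, ℓ⟫, ⟪D, u⟫; ⟪D, T⟫, 1, ⟪T, ℓ⟫, ⟪u, T⟫;
        ⟪D, ℓ⟫, ⟪T, ℓ⟫, 1, ⟪u, ℓ⟫; ⟪D, u⟫, ⟪u, T⟫, ⟪u, ℓ⟫, 1] := by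
    ext i j
    fin_cases i <;> fin_cases j <;> simp [real_inner_comm, hD, hT, hu, hℓ]
  rw [hgram, det_fin_four_symm_of_diag_one] at hdet
  exact one_sub_abs_mul_one_sub_abs_le hDT hDℓ huT huℓ hdet

theorem stmt_5_general (D T u ℓ : EuclideanSpace ℝ (Fin 3)) (ε : ℝ)
    (hD : ‖D‖ = 1) (hT : ‖T‖ = 1) (hu : ‖u‖ = 1) (hℓ : ‖ℓ‖ = 1)
    (hDT : |⟪D, T⟫| ≤ ε) (hDℓ : |⟪D, ℓ⟫| ≤ ε)
    (huT : |⟪u, T⟫| ≤ ε) (huℓ : |⟪u, ℓ⟫| ≤ ε)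
    (hTℓ : |⟪T, ℓ⟫| ≤ 0.98) :
    1 - 202 * ε ^ 2 ≤ |⟪D, u⟫| := by
  have hDu : |⟪D, u⟫| ≤ 1 := by simpa [hD, hu] using abs_real_inner_le_norm D u
  have hkey := one_sub_abs_inner_mul_one_sub_abs_inner_le (by simp) hD hT hu hℓ hDT hDℓ huT huℓ
  have hgap : 0.02 * (1 - |⟪D, u⟫|) ≤ (1 - |⟪T, ℓ⟫|) * (1 - |⟪D, u⟫|) :=
    mul_le_mul_of_nonneg_right (by linarith) (by linarith)
  linarith [sq_nonneg ε]

theorem stmt_5 (D T u ℓ : EuclideanSpace ℝ (Fin 3)) (ε : ℝ) (hε : 0 ≤ ε)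
    (hD : ‖D‖ = 1) (hT : ‖T‖ = 1) (hu : ‖u‖ = 1) (hℓ : ‖ℓ‖ = 1)
    (hDT : |⟪D, T⟫| ≤ ε) (hDℓ : |⟪D, ℓ⟫| ≤ ε)
    (huT : |⟪u, T⟫| ≤ ε) (huℓ : |⟪u, ℓ⟫| ≤ ε)
    (hTℓ : |⟪T, ℓ⟫| ≤ 0.98) :
    1 - 202 * ε ^ 2 ≤ |⟪D, u⟫| :=
  stmt_5_general D T u ℓ ε hD hT hu hℓ hDT hDℓ huT huℓ hTℓ
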